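/- arXiv:2305.04918 — 2 statements merged into one kernel-verified Lean document; each statement's English description precedes it below -/
import Mathlib

section
/- Every bi-matrix game on n ≥ 3 pure strategies with all payoff entries in [0,1] has, for every ε with 0 < ε ≤ 1, an ε-constrained disjoint equilibrium. -/
open Finset

/-- The probability simplex over a finite strategy set `S`. -/
def simplex (S : Type*) [Fintype S] : Set (S → ℝ) :=
  {x | (∀ i, 0 ≤ x i) ∧ ∑ i, x i = 1}

/-- Expected payoff `Σᵢⱼ xᵢ yⱼ A i j`. -/
def payoff {S : Type*} [Fintype S] (A : S → S → ℝ) (x y : S → ℝ) : ℝ :=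
  ∑ i, ∑ j, x i * y j * A i j

/-- The point mass at pure strategy `s`. -/
def pureStrat {S : Type*} [DecidableEq S] (s : S) : S → ℝ :=
  fun i => if i = s then 1 else 0

/-- Support of a mixed strategy. -/
def supp {S : Type*} (x : S → ℝ) : Set S := {i | 0 < x i}

/-- L1 distance between mixed strategies. -/
def dist1 {S : Type*} [Fintype S] (x y : S → ℝ) : ℝ := ∑ i, |x i - y i|

/-- `(x, y)` is an ε-Nash equilibrium of the bi-matrix game `(R, C)`. -/
def IsEpsNash {S : Type*} [Fintype S] [DecidableEq S]
    (R C : S → S → ℝ) (x y : S → ℝ) (ε : ℝ) : Prop :=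
  x ∈ simplex S ∧ y ∈ simplex S ∧
  (∀ s : S, payoff R (pureStrat s) y ≤ payoff R x y + ε) ∧
  (∀ s : S, payoff C x (pureStrat s) ≤ payoff C x y + ε)

/-- `(x, y)` is an ε-constrained disjoint equilibrium: the supports are disjoint
and neither player can gain more than ε by deviating to a mixed strategy whose
support is disjoint from the opponent's support. -/
def IsConstrainedDisjointEq {S : Type*} [Fintype S]
    (R C : S → S → ℝ) (x y : S → ℝ) (ε : ℝ) : Prop :=
  x ∈ simplex S ∧ y ∈ simplex S ∧ supp x ∩ supp y = ∅ ∧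
  (∀ x' ∈ simplex S, supp x' ∩ supp y = ∅ → payoff R x' y ≤ payoff R x y + ε) ∧
  (∀ y' ∈ simplex S, supp y' ∩ supp x = ∅ → payoff C x y' ≤ payoff C x y + ε)

/-!
Let the column player play a pure strategy `z`, and let the row player play the mixture
`(1 - ε) e_b + ε u`, where `b ≠ z` is a best reply to `z` among the rows `≠ z` and `u` is
uniform on the rows `≠ z`. The row support is then exactly the complement of `{z}`, so the
column player's only admissible deviation is `z` itself, while every admissible row deviation
earns at most `R b z ≤ (1 - ε) R b z + ε` because payoffs lie in `[0, 1]`.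
-/

section

variable {S : Type*}

lemma eq_zero_of_supp_inter_eq_empty {x y : S → ℝ} (hx : ∀ i, 0 ≤ x i)
    (h : supp x ∩ supp y = ∅) {i : S} (hy : 0 < y i) : x i = 0 :=
  le_antisymm (not_lt.mp fun hxi => (Set.eq_empty_iff_forall_notMem.mp h) i ⟨hxi, hy⟩) (hx i)

lemma supp_pureStrat [DecidableEq S] (z : S) : supp (pureStrat z) = {z} := by
  ext i
  by_cases h : i = z <;> simp [supp, pureStrat, h]

variable [Fintype S] [DecidableEq S]

lemma payoff_pureStrat_right (A : S → S → ℝ) (x : S → ℝ) (z : S) :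
    payoff A x (pureStrat z) = ∑ i, x i * A i z := by
  simp [payoff, pureStrat, ite_mul]

lemma pureStrat_mem_simplex (z : S) : pureStrat z ∈ simplex S :=
  ⟨fun i => by unfold pureStrat; split_ifs <;> norm_num, by simp [pureStrat]⟩

lemma eq_pureStrat_of_simplex {y : S → ℝ} (hy : y ∈ simplex S) {z : S}
    (h : ∀ i, i ≠ z → y i = 0) : y = pureStrat z := by
  have hyz : y z = 1 := by
    rw [← hy.2, Finset.sum_eq_single z (fun i _ hi => h i hi) (by simp)]
  funext i
  by_cases hi : i = z
  · simp [pureStrat, hi, hyz]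
  · simp [pureStrat, hi, h i hi]

theorem isConstrainedDisjointEq_pureStrat (R C : S → S → ℝ) {x : S → ℝ} {z : S} {ε : ℝ}
    (hε : 0 ≤ ε) (hx : x ∈ simplex S) (hxz : x z = 0) (hpos : ∀ i, i ≠ z → 0 < x i)
    (hbest : ∀ i, i ≠ z → R i z ≤ payoff R x (pureStrat z) + ε) :
    IsConstrainedDisjointEq R C x (pureStrat z) ε := by
  refine ⟨hx, pureStrat_mem_simplex z, ?_, ?_, ?_⟩
  · rw [supp_pureStrat, Set.eq_empty_iff_forall_notMem]
    rintro i ⟨hxi, hiz⟩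
    exact (hxi : 0 < x i).ne' (Set.mem_singleton_iff.mp hiz ▸ hxz)
  · intro x' hx' hdisj
    have hx'z : x' z = 0 :=
      eq_zero_of_supp_inter_eq_empty hx'.1 hdisj (by simp [pureStrat])
    calc payoff R x' (pureStrat z) = ∑ i, x' i * R i z := payoff_pureStrat_right R x' z
      _ ≤ ∑ i, x' i * (payoff R x (pureStrat z) + ε) := by
        refine Finset.sum_le_sum fun i _ => ?_
        by_cases hi : i = z
        · simp [hi, hx'z]
        · exact mul_le_mul_of_nonneg_left (hbest i hi) (hx'.1 i)
      _ = payoff R x (pureStrat z) + ε := by rw [← Finset.sum_mul, hx'.2, one_mul]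
  · intro y' hy' hdisj
    rw [eq_pureStrat_of_simplex hy' fun i hi => eq_zero_of_supp_inter_eq_empty hy'.1 hdisj
      (hpos i hi)]
    linarith

noncomputable def uniformOff (z : S) : S → ℝ :=
  fun i => if i = z then 0 else ((Fintype.card S : ℝ) - 1)⁻¹

lemma uniformOff_mem_simplex (hS : 1 < Fintype.card S) (z : S) :
    uniformOff z ∈ simplex S := by
  have hpos : (0 : ℝ) < (Fintype.card S : ℝ) - 1 := by
    have : (1 : ℝ) < Fintype.card S := by exact_mod_cast hS
    linarith
  refine ⟨fun i => ?_, ?_⟩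
  · unfold uniformOff
    split_ifs
    exacts [le_rfl, (inv_pos.mpr hpos).le]
  · simp only [uniformOff, Finset.sum_ite, Finset.sum_const_zero, zero_add, Finset.sum_const,
      nsmul_eq_mul, Finset.filter_ne', Finset.card_erase_of_mem (Finset.mem_univ z),
      Finset.card_univ]
    rw [Nat.cast_sub hS.le, Nat.cast_one]
    exact mul_inv_cancel₀ hpos.ne'

theorem exists_isConstrainedDisjointEq (hS : 1 < Fintype.card S) (R C : S → S → ℝ)
    (hR : ∀ i j, R i j ∈ Set.Icc (0 : ℝ) 1) {ε : ℝ} (hε : 0 < ε) (hε1 : ε ≤ 1) :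
    ∃ x y : S → ℝ, IsConstrainedDisjointEq R C x y ε := by
  obtain ⟨z, b₀, hb₀⟩ := Fintype.exists_pair_of_one_lt_card hS
  obtain ⟨b, hb, hbest⟩ := (univ.erase z).exists_max_image (fun i => R i z)
    ⟨b₀, Finset.mem_erase.mpr ⟨hb₀.symm, Finset.mem_univ _⟩⟩
  have hbz : b ≠ z := Finset.ne_of_mem_erase hb
  have hu := uniformOff_mem_simplex hS z
  set x : S → ℝ := (1 - ε) • pureStrat b + ε • uniformOff z
  -- `simplex S` unfolds to Mathlib's convex `stdSimplex ℝ S`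
  have hxmem : x ∈ simplex S :=
    convex_stdSimplex ℝ S (pureStrat_mem_simplex b) hu (by linarith) hε.le (by ring)
  have hxi : ∀ i, x i = (1 - ε) * pureStrat b i + ε * uniformOff z i := fun i => rfl
  have hxb : 1 - ε ≤ x b := by
    rw [hxi]
    nlinarith [hu.1 b, show pureStrat b b = 1 by simp [pureStrat]]
  refine ⟨x, pureStrat z, isConstrainedDisjointEq_pureStrat R C hε.le hxmem ?_ ?_ ?_⟩
  · simp [hxi, pureStrat, uniformOff, hbz.symm]
  · intro i hi
    have hpure : 0 ≤ pureStrat b i := (pureStrat_mem_simplex b).1 i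
    have hunif : 0 < uniformOff z i := by
      simp only [uniformOff, if_neg hi, inv_pos, sub_pos, Nat.one_lt_cast, hS]
    rw [hxi]
    nlinarith
  · intro i hi
    have hRbz := hR b z
    calc R i z ≤ R b z := hbest i (Finset.mem_erase.mpr ⟨hi, Finset.mem_univ i⟩)
      _ ≤ x b * R b z + ε := by nlinarith [hRbz.1, hRbz.2]
      _ ≤ ∑ i, x i * R i z + ε := by
        gcongr
        exact Finset.single_le_sum (f := fun i => x i * R i z)
          (fun i _ => mul_nonneg (hxmem.1 i) (hR i z).1) (Finset.mem_univ b)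
      _ = payoff R x (pureStrat z) + ε := by rw [payoff_pureStrat_right]

end

theorem stmt4_general {n : ℕ} (hn : 3 ≤ n) (R C : Fin n → Fin n → ℝ)
    (hR : ∀ i j, R i j ∈ Set.Icc (0 : ℝ) 1)
    (ε : ℝ) (hε : 0 < ε) (hε1 : ε ≤ 1) :
    ∃ x y : Fin n → ℝ, IsConstrainedDisjointEq R C x y ε :=
  exists_isConstrainedDisjointEq (by rw [Fintype.card_fin]; omega) R C hR hε hε1

theorem stmt4 {n : ℕ} (hn : 3 ≤ n) (R C : Fin n → Fin n → ℝ)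
    (hR : ∀ i j, R i j ∈ Set.Icc (0 : ℝ) 1) (hC : ∀ i j, C i j ∈ Set.Icc (0 : ℝ) 1)
    (ε : ℝ) (hε : 0 < ε) (hε1 : ε ≤ 1) :
    ∃ x y : Fin n → ℝ, IsConstrainedDisjointEq R C x y ε :=
  stmt4_general hn R C hR ε hε hε1
end

section
/- For every 3CNF formula φ with n ≥ 4 variables and ε = 1/(2n³): φ is satisfiable if and only if the game G(φ) has an ε-Nash equilibrium (x, y) with disjoint supports, i.e. Supp(x) ∩ Supp(y) = ∅. Moreover, when φ is satisfiable there is an exact Nash equilibrium with disjoint supports in which the row player uniformly randomizes over the n satisfying literals in its copy L₁ and the column player over the corresponding literals in L₂. -/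
open Finset

/-- A literal over `n` variables: a variable together with a sign
(`true` = the positive literal, `false` = the negated literal). -/
abbrev Lit (n : ℕ) := Fin n × Bool

/-- Negation of a literal. -/
def negLit {n : ℕ} (l : Lit n) : Lit n := (l.1, !l.2)

/-- A 3CNF formula with `n` variables and `m` clauses; each clause is a set of
exactly 3 literals. -/
structure CNF3 (n m : ℕ) where
  clause : Fin m → Finset (Lit n)
  card3 : ∀ c, (clause c).card = 3

/-- An assignment `a` satisfies a clause if some literal of the clause is true under `a`. -/
def SatAssign {n m : ℕ} (φ : CNF3 n m) (a : Fin n → Bool) : Prop :=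
  ∀ c, ∃ l ∈ φ.clause c, a l.1 = l.2

/-- Satisfiability of a 3CNF formula. -/
def CNF3.Satisfiable {n m : ℕ} (φ : CNF3 n m) : Prop :=
  ∃ a : Fin n → Bool, SatAssign φ a

/-- Strategy set of the game `G(φ)`: two copies `L₁`, `L₂` of the literals,
then the variables, the clauses, and the special strategy `f`. -/
abbrev GStrat (n m : ℕ) := Lit n ⊕ (Lit n ⊕ (Fin n ⊕ (Fin m ⊕ Unit)))

/-- The special strategy `f` of the game `G(φ)`. -/
def fStrat (n m : ℕ) : GStrat n m := Sum.inr (Sum.inr (Sum.inr (Sum.inr ())))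

/-- The row player's payoff in the game `G(φ)`. -/
def gU1 {n m : ℕ} (φ : CNF3 n m) : GStrat n m → GStrat n m → ℝ
  | Sum.inr (Sum.inl _), _ => -2 * (n : ℝ)
  | Sum.inr (Sum.inr (Sum.inr (Sum.inr _))),
      Sum.inr (Sum.inr (Sum.inr (Sum.inr _))) => 2 * (n : ℝ)
  | Sum.inr (Sum.inr (Sum.inr (Sum.inr _))), _ => (n : ℝ) - 1
  | _, Sum.inr (Sum.inr (Sum.inr (Sum.inr _))) => 0
  | _, Sum.inl _ => 0
  | Sum.inl a, Sum.inr (Sum.inl b) =>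
      if a = negLit b then (n : ℝ) - 4 else (n : ℝ) - 1
  | Sum.inl _, _ => (n : ℝ) - 4
  | Sum.inr (Sum.inr (Sum.inl w)), Sum.inr (Sum.inl l) =>
      if l.1 = w then 0 else (n : ℝ)
  | Sum.inr (Sum.inr (Sum.inl _)), _ => (n : ℝ) - 4
  | Sum.inr (Sum.inr (Sum.inr (Sum.inl c))), Sum.inr (Sum.inl l) =>
      if l ∈ φ.clause c then 0 else (n : ℝ)
  | Sum.inr (Sum.inr (Sum.inr (Sum.inl _))), _ => (n : ℝ) - 4

/-- The column player's payoff in the game `G(φ)`. -/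
def gU2 {n m : ℕ} (φ : CNF3 n m) : GStrat n m → GStrat n m → ℝ
  | _, Sum.inl _ => -2 * (n : ℝ)
  | Sum.inr (Sum.inr (Sum.inr (Sum.inr _))),
      Sum.inr (Sum.inr (Sum.inr (Sum.inr _))) => 2 * (n : ℝ)
  | _, Sum.inr (Sum.inr (Sum.inr (Sum.inr _))) => (n : ℝ) - 1
  | Sum.inr (Sum.inr (Sum.inr (Sum.inr _))), _ => 0
  | Sum.inr (Sum.inl _), _ => 0
  | Sum.inl a, Sum.inr (Sum.inl b) =>
      if a = negLit b then (n : ℝ) - 4 else (n : ℝ) - 1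
  | _, Sum.inr (Sum.inl _) => (n : ℝ) - 4
  | Sum.inl a, Sum.inr (Sum.inr (Sum.inl w)) =>
      if a.1 = w then 0 else (n : ℝ)
  | _, Sum.inr (Sum.inr (Sum.inl _)) => (n : ℝ) - 4
  | Sum.inl a, Sum.inr (Sum.inr (Sum.inr (Sum.inl c))) =>
      if a ∈ φ.clause c then 0 else (n : ℝ)
  | _, Sum.inr (Sum.inr (Sum.inr (Sum.inl _))) => (n : ℝ) - 4

/-- The row player's strategy that randomizes uniformly over the `n` satisfying
literals in the copy `L₁`. -/
noncomputable def unifL1 {n m : ℕ} (a : Fin n → Bool) : GStrat n m → ℝ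
  | Sum.inl l => if a l.1 = l.2 then 1 / (n : ℝ) else 0
  | _ => 0

/-- The column player's strategy that randomizes uniformly over the `n` satisfying
literals in the copy `L₂`. -/
noncomputable def unifL2 {n m : ℕ} (a : Fin n → Bool) : GStrat n m → ℝ
  | Sum.inr (Sum.inl l) => if a l.1 = l.2 then 1 / (n : ℝ) else 0
  | _ => 0

/-!
Exchanging the two literal copies `L₁` and `L₂` transposes the game,
`gU2 φ a b = gU1 φ (swap b) (swap a)`, so everything is proved about the row player's ε-best
responses and then applied to both players.

Against `y`, the strategy `f` pays `n - 1 + (n + 1) y(f)` while every other strategy pays at most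
`n (1 - y(f))`. Hence if one player puts weight `> 1/4` on `f`, the other is pushed almost entirely
onto `f` too, which disjoint supports forbid. Then each player puts mass `≥ 1/2` on its own literal
copy, and the opponent's copy, which pays `-2n`, gets mass `O(ε / n)`. A literal in `L₁` falls
short of the equilibrium payoff by at least `2n y(f) + 3 y(V ∪ C) - ε`, so `y(f) = O(ε / n)`,
`y(V ∪ C) = O(ε)` and the equilibrium payoff is `n - 1 + O(ε)`. Up to these small terms a variable
or clause strategy pays `n` times the `L₂`-mass outside its literals, so every variable and every
clause carries `L₂`-mass at least `(1 - 10ε) / n`.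

Set each variable to its literal of larger `L₂`-mass. A clause without a true literal contains a
literal `l` of `L₂`-mass `≥ (1 - 10ε) / (3n)` whose negation is at least as heavy; then `l` and `¬l`
in `L₁` both lose about `1 / n` against `y`, so the row player gives the variable of `l` mass
`O(nε)`, contradicting the variable bound because `n² ε ≤ 1/8`.

Conversely, against uniform play over the true literals in `L₂` every pure strategy pays at most
`n - 1`, with equality on the true literals in `L₁`.
-/

theorem pureStrat_comp {S : Type*} [DecidableEq S] {σ : S → S} (hσ : Function.Involutive σ)
    (t : S) : pureStrat t ∘ σ = pureStrat (σ t) := by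
  funext i
  simp [pureStrat, hσ.eq_iff]

section Bimatrix

variable {S : Type*} [Fintype S]

theorem payoff_eq_sum_mul (A : S → S → ℝ) (x y : S → ℝ) :
    payoff A x y = ∑ i, x i * ∑ j, y j * A i j := by
  simp only [payoff, Finset.mul_sum, mul_assoc]

theorem simplex_comp {σ : S → S} (hσ : Function.Involutive σ) {x : S → ℝ}
    (hx : x ∈ simplex S) : x ∘ σ ∈ simplex S :=
  ⟨fun i => hx.1 (σ i), (Equiv.sum_comp hσ.toPerm x).trans hx.2⟩

theorem payoff_eq_payoff_comp {σ : S → S} (hσ : Function.Involutive σ) {R C : S → S → ℝ}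
    (hC : ∀ i j, C i j = R (σ j) (σ i)) (x y : S → ℝ) :
    payoff C x y = payoff R (y ∘ σ) (x ∘ σ) := by
  unfold payoff
  rw [Finset.sum_comm]
  refine Fintype.sum_equiv hσ.toPerm _ _ fun j => Fintype.sum_equiv hσ.toPerm _ _ fun i => ?_
  simp [hσ _, hC, mul_comm]

variable [DecidableEq S]

def IsEpsBestResponse (A : S → S → ℝ) (x y : S → ℝ) (ε : ℝ) : Prop :=
  ∀ s, payoff A (pureStrat s) y ≤ payoff A x y + ε

theorem payoff_pureStrat_left (A : S → S → ℝ) (s : S) (y : S → ℝ) :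
    payoff A (pureStrat s) y = ∑ j, y j * A s j := by
  simp [payoff_eq_sum_mul, pureStrat]

theorem payoff_eq_sum_payoff_pureStrat (A : S → S → ℝ) (x y : S → ℝ) :
    payoff A x y = ∑ i, x i * payoff A (pureStrat i) y := by
  rw [payoff_eq_sum_mul]
  simp only [payoff_pureStrat_left]

theorem isEpsNash_iff_isEpsBestResponse {σ : S → S} (hσ : Function.Involutive σ)
    {R C : S → S → ℝ} (hC : ∀ i j, C i j = R (σ j) (σ i)) {x y : S → ℝ} {ε : ℝ} :
    IsEpsNash R C x y ε ↔ x ∈ simplex S ∧ y ∈ simplex S ∧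
      IsEpsBestResponse R x y ε ∧ IsEpsBestResponse R (y ∘ σ) (x ∘ σ) ε := by
  simp only [IsEpsNash, IsEpsBestResponse, payoff_eq_payoff_comp hσ hC, pureStrat_comp hσ]
  exact and_congr_right' (and_congr_right' (and_congr_right'
    ⟨fun h s => by simpa only [hσ s] using h (σ s), fun h s => h (σ s)⟩))

theorem IsEpsNash.mono {R C : S → S → ℝ} {x y : S → ℝ} {ε ε' : ℝ}
    (h : IsEpsNash R C x y ε) (hε : ε ≤ ε') : IsEpsNash R C x y ε' :=
  ⟨h.1, h.2.1, fun s => (h.2.2.1 s).trans (by linarith),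
    fun s => (h.2.2.2 s).trans (by linarith)⟩

theorem IsEpsBestResponse.mul_sum_le {A : S → S → ℝ} {x y : S → ℝ} {ε : ℝ}
    (h : IsEpsBestResponse A x y ε) (hx : x ∈ simplex S) (hε : 0 ≤ ε) {T : Finset S}
    {γ : ℝ} (hT : ∀ s ∈ T, payoff A (pureStrat s) y + γ ≤ payoff A x y) :
    γ * ∑ s ∈ T, x s ≤ ε := by
  set U := payoff A x y
  -- the regrets `U - payoff A (pureStrat s) y` have `x`-average zero and are all `≥ -ε`
  have hzero : ∑ s, x s * (U - payoff A (pureStrat s) y) = 0 := by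
    simp only [mul_sub, Finset.sum_sub_distrib, ← Finset.sum_mul, hx.2, one_mul, U,
      ← payoff_eq_sum_payoff_pureStrat, sub_self]
  have hin : γ * ∑ s ∈ T, x s ≤ ∑ s ∈ T, x s * (U - payoff A (pureStrat s) y) := by
    rw [Finset.mul_sum]
    exact Finset.sum_le_sum fun s hs => by nlinarith [hx.1 s, hT s hs]
  have hout : -ε ≤ ∑ s ∈ Tᶜ, x s * (U - payoff A (pureStrat s) y) := by
    have hmass : ∑ s ∈ Tᶜ, x s ≤ 1 := hx.2 ▸ Finset.sum_le_univ_sum_of_nonneg hx.1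
    calc -ε ≤ ∑ s ∈ Tᶜ, x s * -ε := by
          rw [← Finset.sum_mul]; nlinarith [mul_le_mul_of_nonneg_right hmass hε]
      _ ≤ _ := Finset.sum_le_sum fun s _ => by nlinarith [hx.1 s, h s]
  linarith [Finset.sum_add_sum_compl T fun s => x s * (U - payoff A (pureStrat s) y)]

theorem isEpsBestResponse_zero_of_supp {A : S → S → ℝ} {x y : S → ℝ} {v : ℝ}
    (hx : x ∈ simplex S) (hle : ∀ s, payoff A (pureStrat s) y ≤ v)
    (heq : ∀ s ∈ supp x, payoff A (pureStrat s) y = v) : IsEpsBestResponse A x y 0 := by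
  have hU : payoff A x y = v := by
    rw [payoff_eq_sum_payoff_pureStrat]
    calc ∑ s, x s * payoff A (pureStrat s) y = ∑ s, x s * v := by
          refine Finset.sum_congr rfl fun s _ => ?_
          rcases (hx.1 s).eq_or_lt with h | h
          · simp [← h]
          · rw [heq s h]
      _ = v := by rw [← Finset.sum_mul, hx.2, one_mul]
  intro s
  rw [hU, add_zero]
  exact hle s

end Bimatrix

section Literals

variable {n : ℕ}

theorem negLit_involutive : Function.Involutive (negLit (n := n)) := by
  intro l; simp [negLit]

theorem eq_negLit_comm {a b : Lit n} : a = negLit b ↔ b = negLit a := by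
  rw [eq_comm, negLit_involutive.eq_iff]

def varLits (w : Fin n) : Finset (Lit n) := {(w, true), (w, false)}

theorem mem_varLits {w : Fin n} {l : Lit n} : l ∈ varLits w ↔ l.1 = w := by
  obtain ⟨v, _ | _⟩ := l <;> simp [varLits]

theorem negLit_ne_self (l : Lit n) : negLit l ≠ l := by
  obtain ⟨w, _ | _⟩ := l <;> simp [negLit]

theorem sum_varLits_fst {M : Type*} [AddCommMonoid M] (f : Lit n → M) (l : Lit n) :
    ∑ l' ∈ varLits l.1, f l' = f l + f (negLit l) := by
  obtain ⟨w, _ | _⟩ := l <;> simp [varLits, negLit, add_comm]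

end Literals

namespace GStrat

variable {n m : ℕ}

abbrev lit₁ (l : Lit n) : GStrat n m := Sum.inl l
abbrev lit₂ (l : Lit n) : GStrat n m := Sum.inr (Sum.inl l)
abbrev var (w : Fin n) : GStrat n m := Sum.inr (Sum.inr (Sum.inl w))
abbrev clause (c : Fin m) : GStrat n m := Sum.inr (Sum.inr (Sum.inr (Sum.inl c)))

def swap : GStrat n m → GStrat n m
  | Sum.inl l => lit₂ l
  | Sum.inr (Sum.inl l) => lit₁ l
  | s => s

theorem swap_involutive : Function.Involutive (swap (n := n) (m := m)) := by
  rintro (_ | _ | _ | _ | _) <;> rfl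

theorem sum_eq {M : Type*} [AddCommMonoid M] (g : GStrat n m → M) :
    ∑ s, g s
      = ∑ l, g (lit₁ l) + ∑ l, g (lit₂ l) + (∑ w, g (var w) + ∑ c, g (clause c))
        + g (fStrat n m) := by
  simp only [Fintype.sum_sum_type, Finset.univ_unique, Finset.sum_singleton, add_assoc]
  rfl

end GStrat

open GStrat

theorem sum_mul_ite_mem {ι : Type*} [Fintype ι] [DecidableEq ι] (f : ι → ℝ) (T : Finset ι)
    (α β : ℝ) :
    ∑ i, f i * (if i ∈ T then α else β) = β * ∑ i, f i - (β - α) * ∑ i ∈ T, f i := by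
  have h : ∀ i, f i * (if i ∈ T then α else β)
      = β * f i - (β - α) * (if i ∈ T then f i else 0) := by
    intro i; split_ifs <;> ring
  simp only [h, Finset.sum_sub_distrib, ← Finset.mul_sum, Finset.sum_ite_mem, Finset.univ_inter]

section Masses

variable {n m : ℕ}

def massL₁ (y : GStrat n m → ℝ) : ℝ := ∑ l, y (lit₁ l)
def massL₂On (y : GStrat n m → ℝ) (T : Finset (Lit n)) : ℝ := ∑ l ∈ T, y (lit₂ l)
def massL₂ (y : GStrat n m → ℝ) : ℝ := massL₂On y Finset.univ
def massVC (y : GStrat n m → ℝ) : ℝ := ∑ w, y (var w) + ∑ c, y (clause c)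

variable {y : GStrat n m → ℝ}

theorem massL₁_nonneg (hy : y ∈ simplex (GStrat n m)) : 0 ≤ massL₁ y :=
  Finset.sum_nonneg fun _ _ => hy.1 _

theorem massL₂On_nonneg (hy : y ∈ simplex (GStrat n m)) (T : Finset (Lit n)) :
    0 ≤ massL₂On y T :=
  Finset.sum_nonneg fun _ _ => hy.1 _

theorem massL₂_nonneg (hy : y ∈ simplex (GStrat n m)) : 0 ≤ massL₂ y :=
  massL₂On_nonneg hy Finset.univ

theorem massVC_nonneg (hy : y ∈ simplex (GStrat n m)) : 0 ≤ massVC y :=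
  add_nonneg (Finset.sum_nonneg fun _ _ => hy.1 _) (Finset.sum_nonneg fun _ _ => hy.1 _)

theorem mass_add_eq_one (hy : y ∈ simplex (GStrat n m)) :
    massL₁ y + massL₂ y + massVC y + y (fStrat n m) = 1 :=
  (GStrat.sum_eq y).symm.trans hy.2

theorem sum_image_lit₁ (x : GStrat n m → ℝ) :
    ∑ s ∈ Finset.univ.image lit₁, x s = massL₁ x :=
  Finset.sum_image fun _ _ _ _ h => Sum.inl_injective h

theorem sum_image_lit₂ (x : GStrat n m → ℝ) :
    ∑ s ∈ Finset.univ.image lit₂, x s = massL₂ x :=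
  Finset.sum_image fun _ _ _ _ h => Sum.inl_injective (Sum.inr_injective h)

end Masses

section Payoffs

variable {n m : ℕ} (φ : CNF3 n m) (y : GStrat n m → ℝ)

theorem payoff_gU1_fStrat :
    payoff (gU1 φ) (pureStrat (fStrat n m)) y
      = (n - 1) * ∑ s, y s + (n + 1) * y (fStrat n m) := by
  simp only [payoff_pureStrat_left, GStrat.sum_eq, fStrat, gU1, ← Finset.sum_mul]
  ring

theorem payoff_gU1_lit₂ (l : Lit n) :
    payoff (gU1 φ) (pureStrat (lit₂ l)) y = -2 * n * ∑ s, y s := by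
  simp only [payoff_pureStrat_left, GStrat.sum_eq, fStrat, gU1, ← Finset.sum_mul]
  ring

theorem payoff_gU1_lit₁ (a : Lit n) :
    payoff (gU1 φ) (pureStrat (lit₁ a)) y
      = (n - 1) * massL₂ y - 3 * y (lit₂ (negLit a)) + (n - 4) * massVC y := by
  have h : ∀ l, a = negLit l ↔ l ∈ ({negLit a} : Finset (Lit n)) := fun l => by
    rw [Finset.mem_singleton, eq_negLit_comm]
  simp only [payoff_pureStrat_left, GStrat.sum_eq, fStrat, gU1, h, sum_mul_ite_mem, mul_zero,
    Finset.sum_const_zero, Finset.sum_singleton, massL₂, massL₂On, massVC, ← Finset.sum_mul]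
  ring

theorem payoff_gU1_var (w : Fin n) :
    payoff (gU1 φ) (pureStrat (var w)) y
      = n * (massL₂ y - massL₂On y (varLits w)) + (n - 4) * massVC y := by
  simp only [payoff_pureStrat_left, GStrat.sum_eq, fStrat, gU1, ← mem_varLits, sum_mul_ite_mem,
    mul_zero, Finset.sum_const_zero, massL₂, massL₂On, massVC, ← Finset.sum_mul]
  ring

theorem payoff_gU1_clause (c : Fin m) :
    payoff (gU1 φ) (pureStrat (clause c)) y
      = n * (massL₂ y - massL₂On y (φ.clause c)) + (n - 4) * massVC y := by
  simp only [payoff_pureStrat_left, GStrat.sum_eq, fStrat, gU1, sum_mul_ite_mem,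
    mul_zero, Finset.sum_const_zero, massL₂, massL₂On, massVC, ← Finset.sum_mul]
  ring

theorem gU2_eq_gU1_swap (a b : GStrat n m) : gU2 φ a b = gU1 φ (swap b) (swap a) := by
  rcases a with a | a | a | a | a <;> rcases b with b | b | b | b | b <;> try rfl
  simp only [gU1, gU2, swap, lit₁, lit₂, eq_negLit_comm]

end Payoffs

section RowPlayer

variable {n m : ℕ} {φ : CNF3 n m} {x y : GStrat n m → ℝ} {ε : ℝ}

theorem payoff_gU1_fStrat_of_simplex (hy : y ∈ simplex (GStrat n m)) :
    payoff (gU1 φ) (pureStrat (fStrat n m)) y = n - 1 + (n + 1) * y (fStrat n m) := by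
  rw [payoff_gU1_fStrat, hy.2, mul_one]

theorem payoff_pureStrat_le_of_ne_fStrat (hn : 4 ≤ n) (hy : y ∈ simplex (GStrat n m))
    {s : GStrat n m} (hs : s ≠ fStrat n m) :
    payoff (gU1 φ) (pureStrat s) y ≤ (n - 4) * (1 - y (fStrat n m)) + 4 * massL₂ y := by
  have hn' : (4 : ℝ) ≤ n := by exact_mod_cast hn
  have hsum := mass_add_eq_one hy
  have h₁ := massL₁_nonneg hy
  have h₂ := massL₂_nonneg hy
  have hVC := massVC_nonneg hy
  have hrest : (n - 4) * (massL₂ y + massVC y) ≤ (n - 4) * (1 - y (fStrat n m)) :=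
    mul_le_mul_of_nonneg_left (by linarith) (by linarith)
  rcases s with l | l | w | c | u
  · rw [payoff_gU1_lit₁]
    nlinarith [hy.1 (lit₂ (negLit l))]
  · rw [payoff_gU1_lit₂, hy.2]
    nlinarith [mul_nonneg (by linarith : (0 : ℝ) ≤ n - 4)
      (by linarith : 0 ≤ 1 - y (fStrat n m))]
  · rw [payoff_gU1_var]
    nlinarith [massL₂On_nonneg hy (varLits w)]
  · rw [payoff_gU1_clause]
    nlinarith [massL₂On_nonneg hy (φ.clause c)]
  · exact absurd rfl hs

theorem IsEpsBestResponse.le_payoff (h : IsEpsBestResponse (gU1 φ) x y ε)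
    (hy : y ∈ simplex (GStrat n m)) :
    n - 1 + (n + 1) * y (fStrat n m) - ε ≤ payoff (gU1 φ) x y := by
  linarith [h (fStrat n m), payoff_gU1_fStrat_of_simplex (φ := φ) hy]

theorem IsEpsBestResponse.gap_mul_one_sub_fStrat_le (h : IsEpsBestResponse (gU1 φ) x y ε)
    (hn : 4 ≤ n) (hx : x ∈ simplex (GStrat n m)) (hy : y ∈ simplex (GStrat n m))
    (hε : 0 ≤ ε) :
    (3 + (2 * n - 3) * y (fStrat n m) - 4 * massL₂ y - ε) * (1 - x (fStrat n m)) ≤ ε := by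
  have hmass : ∑ s ∈ {fStrat n m}ᶜ, x s = 1 - x (fStrat n m) := by
    rw [← hx.2, ← Finset.sum_compl_add_sum {fStrat n m}, Finset.sum_singleton,
      add_sub_cancel_right]
  rw [← hmass]
  refine h.mul_sum_le hx hε fun s hs => ?_
  have hU := h.le_payoff hy
  have hs' := payoff_pureStrat_le_of_ne_fStrat (φ := φ) hn hy
    (Finset.mem_compl.1 hs ∘ Finset.mem_singleton.2)
  linarith

theorem IsEpsBestResponse.pos_fStrat (h : IsEpsBestResponse (gU1 φ) x y ε) (hn : 4 ≤ n)
    (hx : x ∈ simplex (GStrat n m)) (hy : y ∈ simplex (GStrat n m)) (hε0 : 0 ≤ ε)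
    (hε : ε ≤ 1 / 4) (hyf : 1 / 4 < y (fStrat n m)) : 0 < x (fStrat n m) := by
  have hn' : (4 : ℝ) ≤ n := by exact_mod_cast hn
  have hgap := h.gap_mul_one_sub_fStrat_le hn hx hy hε0
  have hsum := mass_add_eq_one hx
  have hsum' := mass_add_eq_one hy
  have := massL₁_nonneg hy; have := massVC_nonneg hy
  have := massL₁_nonneg hx; have := massL₂_nonneg hx; have := massVC_nonneg hx
  -- with `massL₂ y ≤ 1 - y f` the gap is at least `(2n + 1) y f - 1 - ε ≥ 1`
  have hbig : 1 ≤ 3 + (2 * n - 3) * y (fStrat n m) - 4 * massL₂ y - ε := by nlinarith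
  nlinarith

theorem IsEpsBestResponse.half_le_massL₂ (h : IsEpsBestResponse (gU1 φ) x y ε) (hn : 4 ≤ n)
    (hx : x ∈ simplex (GStrat n m)) (hy : y ∈ simplex (GStrat n m)) (hε0 : 0 ≤ ε)
    (hε : ε ≤ 1 / 4) (hxf : x (fStrat n m) ≤ 1 / 4) : 1 / 2 ≤ massL₂ y := by
  have hn' : (4 : ℝ) ≤ n := by exact_mod_cast hn
  have hgap := h.gap_mul_one_sub_fStrat_le hn hx hy hε0
  by_contra! hlt
  have hF := hy.1 (fStrat n m)
  have hbig : 3 / 4 ≤ 3 + (2 * n - 3) * y (fStrat n m) - 4 * massL₂ y - ε := by nlinarith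
  nlinarith

theorem IsEpsBestResponse.massL₂_le (h : IsEpsBestResponse (gU1 φ) x y ε) (hn : 4 ≤ n)
    (hx : x ∈ simplex (GStrat n m)) (hy : y ∈ simplex (GStrat n m)) (hε0 : 0 ≤ ε)
    (hε : ε ≤ 1 / 4) : 2 * n * massL₂ x ≤ ε := by
  have hn' : (4 : ℝ) ≤ n := by exact_mod_cast hn
  rw [← sum_image_lit₂]
  refine h.mul_sum_le hx hε0 fun s hs => ?_
  obtain ⟨l, -, rfl⟩ := Finset.mem_image.1 hs
  rw [payoff_gU1_lit₂, hy.2]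
  nlinarith [h.le_payoff hy, hy.1 (fStrat n m)]

theorem IsEpsBestResponse.payoff_lit₁_add_gap_le (h : IsEpsBestResponse (gU1 φ) x y ε)
    (hn : 1 ≤ n) (hy : y ∈ simplex (GStrat n m)) (a : Lit n) :
    payoff (gU1 φ) (pureStrat (lit₁ a)) y
        + (2 * n * y (fStrat n m) + 3 * massVC y + 3 * y (lit₂ (negLit a)) - ε)
      ≤ payoff (gU1 φ) x y := by
  have hsum := mass_add_eq_one hy
  have h₁ := massL₁_nonneg hy
  have hn' : (1 : ℝ) ≤ n := by exact_mod_cast hn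
  rw [payoff_gU1_lit₁]
  nlinarith [h.le_payoff hy]

theorem IsEpsBestResponse.fStrat_massVC_le (h : IsEpsBestResponse (gU1 φ) x y ε)
    (hn : 1 ≤ n) (hx : x ∈ simplex (GStrat n m)) (hy : y ∈ simplex (GStrat n m))
    (hε0 : 0 ≤ ε) (hx₁ : 1 / 2 ≤ massL₁ x) :
    2 * n * y (fStrat n m) + 3 * massVC y ≤ 3 * ε := by
  have hgap : (2 * n * y (fStrat n m) + 3 * massVC y - ε) * massL₁ x ≤ ε := by
    rw [← sum_image_lit₁]
    refine h.mul_sum_le hx hε0 fun s hs => ?_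
    obtain ⟨l, -, rfl⟩ := Finset.mem_image.1 hs
    linarith [h.payoff_lit₁_add_gap_le hn hy l, hy.1 (lit₂ (negLit l))]
  nlinarith

theorem payoff_gU1_le (hn : 1 ≤ n) (hx : x ∈ simplex (GStrat n m))
    (hy : y ∈ simplex (GStrat n m)) :
    payoff (gU1 φ) x y ≤ n - 1 + (n + 1) * y (fStrat n m) + massVC x := by
  have hn' : (1 : ℝ) ≤ n := by exact_mod_cast hn
  obtain ⟨K, hK⟩ : ∃ K : ℝ, K = n - 1 + (n + 1) * y (fStrat n m) := ⟨_, rfl⟩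
  have hsum := mass_add_eq_one hy
  have := massL₁_nonneg hy; have := massL₂_nonneg hy; have := massVC_nonneg hy
  have hblock : ∀ {ι : Type} [Fintype ι] (g : ι → GStrat n m) (B : ℝ),
      (∀ i, payoff (gU1 φ) (pureStrat (g i)) y ≤ B) →
      ∑ i, x (g i) * payoff (gU1 φ) (pureStrat (g i)) y ≤ B * ∑ i, x (g i) :=
    fun g B hB => by
      rw [Finset.mul_sum]
      exact Finset.sum_le_sum fun i _ => by nlinarith [hB i, hx.1 (g i)]
  have h₁ := hblock lit₁ K fun l => by
    rw [payoff_gU1_lit₁]; nlinarith [hy.1 (lit₂ (negLit l)), hy.1 (fStrat n m)]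
  have h₂ := hblock lit₂ K fun l => by
    rw [payoff_gU1_lit₂, hy.2]; nlinarith [hy.1 (fStrat n m)]
  have hV := hblock var (K + 1) fun w => by
    rw [payoff_gU1_var]; nlinarith [massL₂On_nonneg hy (varLits w), hy.1 (fStrat n m)]
  have hC := hblock clause (K + 1) fun c => by
    rw [payoff_gU1_clause]; nlinarith [massL₂On_nonneg hy (φ.clause c), hy.1 (fStrat n m)]
  rw [payoff_eq_sum_payoff_pureStrat, GStrat.sum_eq, payoff_gU1_fStrat_of_simplex hy, ← hK]
  have hsumx := congrArg (K * ·) (mass_add_eq_one hx)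
  simp only [massL₁, massL₂, massL₂On, massVC, mul_one] at hsumx ⊢
  linarith

theorem IsEpsBestResponse.one_sub_le_massL₂On (h : IsEpsBestResponse (gU1 φ) x y ε)
    (hn : 1 ≤ n) (hx : x ∈ simplex (GStrat n m)) (hy : y ∈ simplex (GStrat n m))
    (hy₁ : 2 * n * massL₁ y ≤ ε) (hyf : 2 * n * y (fStrat n m) + 3 * massVC y ≤ 3 * ε)
    (hxf : 2 * n * x (fStrat n m) + 3 * massVC x ≤ 3 * ε) {s : GStrat n m} {T : Finset (Lit n)}
    (hs : payoff (gU1 φ) (pureStrat s) y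
      = n * (massL₂ y - massL₂On y T) + (n - 4) * massVC y) :
    1 - 10 * ε ≤ n * massL₂On y T := by
  have hn' : (1 : ℝ) ≤ n := by exact_mod_cast hn
  have hU := payoff_gU1_le (φ := φ) hn hx hy
  have hsum := mass_add_eq_one hy
  have := massL₁_nonneg hy; have := massVC_nonneg hy; have := hy.1 (fStrat n m)
  have : massVC x ≤ ε := by nlinarith [hx.1 (fStrat n m)]
  nlinarith [h s]

end RowPlayer

noncomputable def majorityAssign {n m : ℕ} (y : GStrat n m → ℝ) (w : Fin n) : Bool :=
  decide (y (lit₂ (w, false)) ≤ y (lit₂ (w, true)))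

theorem le_of_majorityAssign_ne {n m : ℕ} {y : GStrat n m → ℝ} {l : Lit n}
    (hl : majorityAssign y l.1 ≠ l.2) : y (lit₂ l) ≤ y (lit₂ (negLit l)) := by
  obtain ⟨w, _ | _⟩ := l <;> simp_all [majorityAssign, negLit, le_of_lt]

section Rounding

variable {n m : ℕ} {φ : CNF3 n m} {x y : GStrat n m → ℝ} {ε : ℝ}

theorem IsEpsBestResponse.exists_mem_clause_majorityAssign_eq
    (h : IsEpsBestResponse (gU1 φ) x y ε) (hn : 4 ≤ n) (hx : x ∈ simplex (GStrat n m))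
    (hy : y ∈ simplex (GStrat n m)) (hε0 : 0 ≤ ε) (hε : (n : ℝ) ^ 2 * ε ≤ 1 / 8)
    (c : Fin m) (hc : 1 - 10 * ε ≤ n * massL₂On y (φ.clause c))
    (hvar : ∀ l : Lit n, 1 - 10 * ε ≤ n * (x (lit₁ l) + x (lit₁ (negLit l)))) :
    ∃ l ∈ φ.clause c, majorityAssign y l.1 = l.2 := by
  have hn' : (4 : ℝ) ≤ n := by exact_mod_cast hn
  obtain ⟨l, hlc, hl⟩ :
      ∃ l ∈ φ.clause c, massL₂On y (φ.clause c) / 3 ≤ y (lit₂ l) := by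
    refine Finset.exists_le_of_sum_le (Finset.card_pos.1 (by rw [φ.card3]; norm_num)) ?_
    rw [Finset.sum_const, φ.card3, nsmul_eq_mul, massL₂On]
    linarith
  refine ⟨l, hlc, ?_⟩
  by_contra hne
  have hneg := le_of_majorityAssign_ne hne
  have hgap : (3 * y (lit₂ l) - ε) * (x (lit₁ l) + x (lit₁ (negLit l))) ≤ ε := by
    rw [← Finset.sum_pair (a := lit₁ l) (b := lit₁ (negLit l))
      fun h => negLit_ne_self l (Sum.inl_injective h).symm]
    refine h.mul_sum_le hx hε0 fun s hs => ?_
    have := massVC_nonneg hy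
    have : 0 ≤ 2 * (n : ℝ) * y (fStrat n m) := mul_nonneg (by positivity) (hy.1 _)
    rcases Finset.mem_insert.1 hs with rfl | hs
    · linarith [h.payoff_lit₁_add_gap_le (by omega) hy l]
    · rw [Finset.mem_singleton.1 hs]
      have := h.payoff_lit₁_add_gap_le (by omega) hy (negLit l)
      rw [negLit_involutive l] at this
      linarith
  -- after multiplying `hgap` by `n²` both factors are close to `1`, but the product is `≤ n² ε`
  have hε₁ : ε ≤ 1 / 128 := by nlinarith [mul_le_mul hn' hn' (by norm_num) (by linarith)]
  have hε₂ : n * ε ≤ 1 / 32 := by nlinarith [mul_le_mul_of_nonneg_right hn' hε0]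
  have hp : 1 - 10 * ε - n * ε ≤ n * (3 * y (lit₂ l) - ε) := by nlinarith
  nlinarith [mul_le_mul hp (hvar l) (by linarith) (by nlinarith)]

end Rounding

section Uniform

variable {n m : ℕ} (a : Fin n → Bool)

theorem unifL1_comp_swap : unifL1 (m := m) a ∘ swap = unifL2 a := by
  funext s; rcases s with _ | _ | _ | _ | _ <;> rfl

theorem unifL2_comp_swap : unifL2 (m := m) a ∘ swap = unifL1 a := by
  funext s; rcases s with _ | _ | _ | _ | _ <;> rfl

theorem sum_ite_assign_eq_one (hn : 0 < n) :
    ∑ l : Lit n, (if a l.1 = l.2 then 1 / (n : ℝ) else 0) = 1 := by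
  simp only [Fintype.sum_prod_type, Finset.sum_ite_eq, Finset.mem_univ, if_true,
    Finset.sum_const, Finset.card_univ, Fintype.card_fin, nsmul_eq_mul]
  field_simp

theorem unifL1_mem_simplex (hn : 0 < n) : unifL1 (m := m) a ∈ simplex (GStrat n m) := by
  refine ⟨fun s => ?_, ?_⟩
  · rcases s with l | _ | _ | _ | _ <;> simp only [unifL1, le_refl]
    split_ifs <;> positivity
  · rw [GStrat.sum_eq]
    simpa [unifL1, fStrat] using sum_ite_assign_eq_one a hn

theorem unifL2_mem_simplex (hn : 0 < n) : unifL2 (m := m) a ∈ simplex (GStrat n m) :=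
  unifL1_comp_swap (m := m) a ▸ simplex_comp swap_involutive (unifL1_mem_simplex a hn)

theorem supp_unifL1_inter_supp_unifL2 : supp (unifL1 (m := m) a) ∩ supp (unifL2 a) = ∅ := by
  ext (_ | _ | _ | _ | _) <;> simp [supp, unifL1, unifL2]

theorem massL₂_unifL2 (hn : 0 < n) : massL₂ (unifL2 (m := m) a) = 1 :=
  sum_ite_assign_eq_one a hn

theorem massVC_unifL2 : massVC (unifL2 (m := m) a) = 0 := by
  simp [massVC, unifL2]

variable {φ : CNF3 n m}

theorem payoff_pureStrat_unifL2_le (hn : 0 < n) (ha : SatAssign φ a) (s : GStrat n m) :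
    payoff (gU1 φ) (pureStrat s) (unifL2 a) ≤ n - 1 := by
  have hn' : (1 : ℝ) ≤ n := by exact_mod_cast hn
  have hy := unifL2_mem_simplex (m := m) a hn
  rcases s with l | l | w | c | u
  · rw [payoff_gU1_lit₁, massL₂_unifL2 a hn, massVC_unifL2]
    linarith [hy.1 (lit₂ (negLit l))]
  · rw [payoff_gU1_lit₂, hy.2]
    linarith
  · have hw : massL₂On (unifL2 (m := m) a) (varLits w) = 1 / n := by
      cases h : a w <;> simp [massL₂On, varLits, unifL2, h]
    rw [payoff_gU1_var, massL₂_unifL2 a hn, massVC_unifL2, hw]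
    field_simp
    linarith
  · obtain ⟨l, hl, hal⟩ := ha c
    have hc : 1 / n ≤ massL₂On (unifL2 (m := m) a) (φ.clause c) := by
      refine le_of_eq_of_le (by simp [unifL2, hal])
        (Finset.single_le_sum (fun l _ => hy.1 (lit₂ l)) hl)
    have hinv : (n : ℝ) * (1 / n) = 1 := by field_simp
    rw [payoff_gU1_clause, massL₂_unifL2 a hn, massVC_unifL2]
    nlinarith [mul_le_mul_of_nonneg_left hc (by linarith : (0 : ℝ) ≤ n)]
  · rw [show Sum.inr (Sum.inr (Sum.inr (Sum.inr u))) = fStrat n m from rfl,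
      payoff_gU1_fStrat_of_simplex hy]
    simp [unifL2, fStrat]

theorem isEpsNash_unifL1_unifL2 (hn : 0 < n) (ha : SatAssign φ a) :
    IsEpsNash (gU1 φ) (gU2 φ) (unifL1 a) (unifL2 a) 0 := by
  have hx := unifL1_mem_simplex (m := m) a hn
  have hy := unifL2_mem_simplex (m := m) a hn
  have hbr : IsEpsBestResponse (gU1 φ) (unifL1 a) (unifL2 a) 0 := by
    refine isEpsBestResponse_zero_of_supp hx (payoff_pureStrat_unifL2_le a hn ha) fun s hs => ?_
    rcases s with l | _ | _ | _ | _ <;> simp only [supp, Set.mem_ofPred_eq, unifL1, lt_irrefl] at hs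
    have hal : a l.1 = l.2 := by by_contra h; simp [h] at hs
    have hneg : unifL2 (m := m) a (lit₂ (negLit l)) = 0 := by simp [unifL2, negLit, hal]
    rw [payoff_gU1_lit₁, hneg, massL₂_unifL2 a hn, massVC_unifL2]
    ring
  rw [isEpsNash_iff_isEpsBestResponse swap_involutive (gU2_eq_gU1_swap φ)]
  exact ⟨hx, hy, hbr, by rwa [unifL2_comp_swap, unifL1_comp_swap]⟩

end Uniform

theorem CNF3.satisfiable_of_isEpsNash {n m : ℕ} {φ : CNF3 n m} {x y : GStrat n m → ℝ}
    {ε : ℝ} (hn : 4 ≤ n) (hε0 : 0 ≤ ε) (hε : (n : ℝ) ^ 2 * ε ≤ 1 / 8)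
    (hN : IsEpsNash (gU1 φ) (gU2 φ) x y ε) (hd : supp x ∩ supp y = ∅) : φ.Satisfiable := by
  obtain ⟨hx, hy, hbr, hbr'⟩ :=
    (isEpsNash_iff_isEpsBestResponse swap_involutive (gU2_eq_gU1_swap φ)).1 hN
  have hx' := simplex_comp swap_involutive hx
  have hy' := simplex_comp swap_involutive hy
  have hn1 : 1 ≤ n := by omega
  have hε4 : ε ≤ 1 / 4 := by
    have : (16 : ℝ) ≤ n ^ 2 := by exact_mod_cast Nat.pow_le_pow_left hn 2
    nlinarith
  have hf : ¬(0 < x (fStrat n m) ∧ 0 < y (fStrat n m)) := fun h =>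
    (Set.eq_empty_iff_forall_notMem.1 hd) (fStrat n m) h
  have hxf : x (fStrat n m) ≤ 1 / 4 := by
    by_contra! h
    exact hf ⟨by linarith, hbr'.pos_fStrat hn hy' hx' hε0 hε4 h⟩
  have hyf : y (fStrat n m) ≤ 1 / 4 := by
    by_contra! h
    exact hf ⟨hbr.pos_fStrat hn hx hy hε0 hε4 h, by linarith⟩
  have hyVC := hbr.fStrat_massVC_le hn1 hx hy hε0 (hbr'.half_le_massL₂ hn hy' hx' hε0 hε4 hyf)
  have hxVC := hbr'.fStrat_massVC_le hn1 hy' hx' hε0 (hbr.half_le_massL₂ hn hx hy hε0 hε4 hxf)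
  refine ⟨majorityAssign y, fun c => hbr.exists_mem_clause_majorityAssign_eq hn hx hy hε0 hε c
    (hbr.one_sub_le_massL₂On hn1 hx hy (hbr'.massL₂_le hn hy' hx' hε0 hε4) hyVC hxVC
      (payoff_gU1_clause φ y c)) fun l => ?_⟩
  have := hbr'.one_sub_le_massL₂On hn1 hy' hx' (hbr.massL₂_le hn hx hy hε0 hε4) hxVC hyVC
    (payoff_gU1_var φ _ l.1)
  rwa [massL₂On, sum_varLits_fst] at this

theorem stmt16 {n m : ℕ} (hn : 4 ≤ n) (φ : CNF3 n m)
    (ε : ℝ) (hε : ε = 1 / (2 * (n : ℝ) ^ 3)) :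
    (φ.Satisfiable ↔ ∃ x y : GStrat n m → ℝ,
        IsEpsNash (gU1 φ) (gU2 φ) x y ε ∧ supp x ∩ supp y = ∅) ∧
    (φ.Satisfiable → ∃ a : Fin n → Bool, SatAssign φ a ∧
        IsEpsNash (gU1 φ) (gU2 φ) (unifL1 a) (unifL2 a) 0 ∧
        supp (unifL1 (m := m) a) ∩ supp (unifL2 a) = ∅) := by
  have hn0 : 0 < n := by omega
  have hε0 : 0 ≤ ε := by rw [hε]; positivity
  have hεn : (n : ℝ) ^ 2 * ε ≤ 1 / 8 := by
    have hn' : (4 : ℝ) ≤ n := by exact_mod_cast hn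
    rw [hε, mul_one_div, div_le_div_iff₀ (by positivity) (by norm_num)]
    nlinarith
  have hunif : ∀ a, SatAssign φ a → IsEpsNash (gU1 φ) (gU2 φ) (unifL1 a) (unifL2 a) 0 ∧
      supp (unifL1 (m := m) a) ∩ supp (unifL2 a) = ∅ := fun a ha =>
    ⟨isEpsNash_unifL1_unifL2 a hn0 ha, supp_unifL1_inter_supp_unifL2 a⟩
  refine ⟨⟨fun ⟨a, ha⟩ => ⟨unifL1 a, unifL2 a, (hunif a ha).1.mono hε0, (hunif a ha).2⟩,
    fun ⟨x, y, hN, hd⟩ => CNF3.satisfiable_of_isEpsNash hn hε0 hεn hN hd⟩,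
    fun ⟨a, ha⟩ => ⟨a, ha, hunif a ha⟩⟩
end
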